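/- arXiv:0705.3443 — 2 statements merged into one kernel-verified Lean document; each statement's English description precedes it below -/
import Mathlib

section
/- For every μ > 0, the function K_μ is integrable on ℝ and ∫_ℝ K_μ(x) dx = √(2π)/μ. -/
open MeasureTheory Set

/-- The kernel `K_μ(x) = √(2/π) ∫_0^∞ τ e^{−|x|τ}/(μ²+τ²) dτ`. -/
noncomputable def Kmu (μ x : ℝ) : ℝ :=
  Real.sqrt (2 / Real.pi) * ∫ τ in Ioi (0:ℝ), τ * Real.exp (-|x| * τ) / (μ ^ 2 + τ ^ 2)

/-! The integrand is nonnegative, so Fubini applies once the iterated integral is finite.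
Integrating in `x` first, `∫ e^{-|x|τ} dx = 2/τ` cancels the factor `τ`, leaving
`2 ∫_0^∞ dτ/(μ²+τ²) = π/μ`. -/

open Real

theorem integral_exp_neg_abs_mul {t : ℝ} (ht : 0 < t) : ∫ x : ℝ, exp (-|x| * t) = 2 / t := by
  have h := integral_comp_mul_right_Ioi (fun y : ℝ => exp (-y)) 0 ht
  simp only [zero_mul, smul_eq_mul, integral_exp_neg_Ioi_zero, mul_one] at h
  rw [integral_comp_abs (f := fun y => exp (-y * t))]
  simp only [neg_mul] at h ⊢
  rw [h, div_eq_mul_inv]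

theorem integral_Ioi_inv_sq_add_sq {a : ℝ} (ha : 0 < a) :
    ∫ t in Ioi (0 : ℝ), (a ^ 2 + t ^ 2)⁻¹ = π / (2 * a) := by
  have h := integral_comp_mul_left_Ioi' (fun t : ℝ => (a ^ 2 + t ^ 2)⁻¹) 0 ha
  have hscale : ∀ s : ℝ, (a ^ 2 + (a * s) ^ 2)⁻¹ = (a ^ 2)⁻¹ * (1 + s ^ 2)⁻¹ := fun s => by
    rw [← mul_inv]; ring
  simp only [hscale, integral_const_mul, integral_Ioi_inv_one_add_sq, arctan_zero, sub_zero,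
    mul_zero, smul_eq_mul] at h
  rw [← h]
  field_simp

theorem integrableOn_Ioi_inv_sq_add_sq {a : ℝ} (ha : 0 < a) :
    IntegrableOn (fun t : ℝ => (a ^ 2 + t ^ 2)⁻¹) (Ioi 0) :=
  Integrable.of_integral_ne_zero <| by rw [integral_Ioi_inv_sq_add_sq ha]; positivity

noncomputable def kmuIntegrand (μ x t : ℝ) : ℝ :=
  t * exp (-|x| * t) / (μ ^ 2 + t ^ 2)

theorem integral_kmuIntegrand_fst (μ : ℝ) {t : ℝ} (ht : 0 < t) :
    ∫ x, kmuIntegrand μ x t = 2 * (μ ^ 2 + t ^ 2)⁻¹ := by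
  have hsplit : ∀ x, kmuIntegrand μ x t = t / (μ ^ 2 + t ^ 2) * exp (-|x| * t) := fun x => by
    rw [kmuIntegrand]; ring
  simp only [hsplit, integral_const_mul, integral_exp_neg_abs_mul ht]
  field_simp

theorem integrable_kmuIntegrand_fst (μ : ℝ) {t : ℝ} (ht : 0 < t) :
    Integrable fun x => kmuIntegrand μ x t :=
  Integrable.of_integral_ne_zero <| by rw [integral_kmuIntegrand_fst μ ht]; positivity

theorem integrable_kmuIntegrand {μ : ℝ} (hμ : 0 < μ) :
    Integrable (Function.uncurry (kmuIntegrand μ)) (volume.prod (volume.restrict (Ioi 0))) := by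
  have hmeas : Measurable (Function.uncurry (kmuIntegrand μ)) := by unfold kmuIntegrand; fun_prop
  refine (integrable_prod_iff' hmeas.aestronglyMeasurable).2 ⟨?_, ?_⟩
  · filter_upwards [ae_restrict_mem measurableSet_Ioi] with t ht
    exact integrable_kmuIntegrand_fst μ ht
  · refine ((integrableOn_Ioi_inv_sq_add_sq hμ).const_mul 2).congr ?_
    filter_upwards [ae_restrict_mem measurableSet_Ioi] with t (ht : 0 < t)
    have hnonneg : ∀ x, 0 ≤ kmuIntegrand μ x t := fun x => by unfold kmuIntegrand; positivity
    simp only [Function.uncurry_apply_pair, norm_of_nonneg (hnonneg _),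
      integral_kmuIntegrand_fst μ ht]

theorem sqrt_two_div_pi_mul_pi : √(2 / π) * π = √(2 * π) := by
  rw [← sqrt_sq pi_pos.le, ← sqrt_mul (by positivity), sqrt_sq pi_pos.le]
  field_simp

/-- For every `μ > 0`, `K_μ` is integrable on `ℝ` and `∫_ℝ K_μ(x) dx = √(2π)/μ`. -/
theorem Kmu_integral_eq (μ : ℝ) (hμ : 0 < μ) :
    Integrable (Kmu μ) volume ∧ ∫ x : ℝ, Kmu μ x = Real.sqrt (2 * Real.pi) / μ := by
  have hF := integrable_kmuIntegrand hμ
  refine ⟨hF.integral_prod_left.const_mul _, ?_⟩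
  calc ∫ x, Kmu μ x
      = √(2 / π) * ∫ x, ∫ t in Ioi 0, kmuIntegrand μ x t := integral_const_mul _ _
    _ = √(2 / π) * ∫ t in Ioi 0, ∫ x, kmuIntegrand μ x t := by
        rw [integral_integral_swap hF]
    _ = √(2 / π) * ∫ t in Ioi 0, 2 * (μ ^ 2 + t ^ 2)⁻¹ := by
        rw [setIntegral_congr_fun measurableSet_Ioi fun t ht => integral_kmuIntegrand_fst μ ht]
    _ = √(2 * π) / μ := by
        rw [integral_const_mul, integral_Ioi_inv_sq_add_sq hμ, ← sqrt_two_div_pi_mul_pi]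
        field_simp
end

section
/- For every μ > 0, the derivative K_μ′ is not integrable on ℝ; equivalently, ∫_0^1 (∫_0^∞ τ² e^{−xτ}/(μ²+τ²) dτ) dx = +∞. Consequently K_μ′ ∉ L¹(ℝ). -/
/-!
For `x > 0`, differentiating under the integral sign gives
`K_μ′(x) = −√(2/π) F(x)` with `F(x) = ∫_0^∞ τ² e^{−xτ}/(μ²+τ²) dτ`. Since `τ²/(μ²+τ²) ≥ 1/2`
for `τ ≥ μ`, we get `F(x) ≥ ½ ∫_μ^∞ e^{−xτ} dτ = e^{−μx}/(2x) ≥ e^{−μ}/(2x)` on `(0, 1]`,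
and `1/x` is not integrable at `0`. Hence `F`, and with it `K_μ′`, is not integrable on `(0, 1)`.
-/

open MeasureTheory Set

open Filter Topology Real

section LaplaceTransform

variable {g : ℝ → ℝ} {C C' : ℝ}

theorem integrableOn_Ioi_mul_exp_neg (hg : Continuous g) (hC : ∀ τ ∈ Ioi (0 : ℝ), |g τ| ≤ C)
    {x : ℝ} (hx : 0 < x) :
    IntegrableOn (fun τ => g τ * exp (-x * τ)) (Ioi 0) := by
  refine ((exp_neg_integrableOn_Ioi 0 hx).const_mul C).mono' (by fun_prop) ?_
  filter_upwards [ae_restrict_mem measurableSet_Ioi] with τ hτ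
  rw [norm_mul, norm_of_nonneg (exp_pos _).le, Real.norm_eq_abs]
  exact mul_le_mul_of_nonneg_right (hC τ hτ) (exp_pos _).le

theorem hasDerivAt_integral_Ioi_mul_exp_neg (hg : Continuous g)
    (hC : ∀ τ ∈ Ioi (0 : ℝ), |g τ| ≤ C) (hC' : ∀ τ ∈ Ioi (0 : ℝ), |τ * g τ| ≤ C')
    {x₀ : ℝ} (hx₀ : 0 < x₀) :
    HasDerivAt (fun x => ∫ τ in Ioi 0, g τ * exp (-x * τ))
      (-∫ τ in Ioi 0, τ * g τ * exp (-x₀ * τ)) x₀ := by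
  rw [← integral_neg]
  refine (hasDerivAt_integral_of_dominated_loc_of_deriv_le
    (μ := volume.restrict (Ioi 0)) (F := fun x τ => g τ * exp (-x * τ))
    (F' := fun x τ => -(τ * g τ * exp (-x * τ)))
    (bound := fun τ => C' * exp (-(x₀ / 2) * τ)) (Metric.ball_mem_nhds x₀ (half_pos hx₀))
    (Eventually.of_forall fun x => by fun_prop) (integrableOn_Ioi_mul_exp_neg hg hC hx₀)
    (by fun_prop) ?_ ((exp_neg_integrableOn_Ioi 0 (half_pos hx₀)).const_mul C') ?_).2
  · filter_upwards [ae_restrict_mem measurableSet_Ioi] with τ (hτ : 0 < τ) x hx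
    have hx_half : x₀ / 2 < x := by
      rw [Metric.mem_ball, Real.dist_eq, abs_lt] at hx
      linarith
    rw [norm_neg, norm_mul, norm_of_nonneg (exp_pos _).le, Real.norm_eq_abs]
    exact mul_le_mul (hC' τ hτ) (exp_le_exp.2 (by nlinarith)) (exp_pos _).le
      ((abs_nonneg _).trans (hC' τ hτ))
  · exact ae_of_all _ fun τ x _ =>
      ((((hasDerivAt_neg x).mul_const τ).exp).const_mul (g τ)).congr_deriv (by ring)

end LaplaceTransform

theorem lintegral_Ioo_zero_ofReal_const_mul_inv {d b : ℝ} (hd : 0 < d) (hb : 0 < b) :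
    ∫⁻ x in Ioo 0 b, ENNReal.ofReal (d * x⁻¹) = ⊤ := by
  by_contra h
  have hint : IntegrableOn (fun x => d * x⁻¹) (Ioo 0 b) :=
    ⟨by fun_prop, (hasFiniteIntegral_iff_ofReal (ae_restrict_of_forall_mem measurableSet_Ioo
      fun x hx => by have := hx.1; positivity)).2 (lt_top_iff_ne_top.2 h)⟩
  have hrpow : IntegrableOn (fun x : ℝ => x ^ (-1 : ℝ)) (Ioo 0 b) :=
    IntegrableOn.congr_fun (hint.const_mul d⁻¹) (fun x _ => by
      rw [rpow_neg_one, ← mul_assoc, inv_mul_cancel₀ hd.ne', one_mul]) measurableSet_Ioo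
  exact lt_irrefl _ ((intervalIntegral.integrableOn_Ioo_rpow_iff hb).1 hrpow)

section Kernel

variable {μ : ℝ}

theorem continuous_div_sq_add_sq (hμ : μ ≠ 0) : Continuous fun τ : ℝ => τ / (μ ^ 2 + τ ^ 2) :=
  continuous_id.div (by fun_prop) fun τ => by positivity

theorem abs_div_sq_add_sq_le (hμ : 0 < μ) {τ : ℝ} (hτ : 0 < τ) :
    |τ / (μ ^ 2 + τ ^ 2)| ≤ 1 / (2 * μ) := by
  rw [abs_of_pos (by positivity), div_le_div_iff₀ (by positivity) (by positivity)]
  nlinarith [sq_nonneg (μ - τ)]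

theorem abs_mul_div_sq_add_sq_le_one (τ : ℝ) : |τ * (τ / (μ ^ 2 + τ ^ 2))| ≤ 1 := by
  rw [← mul_div_assoc, ← sq, abs_of_nonneg (by positivity)]
  exact div_le_one_of_le₀ (by nlinarith [sq_nonneg μ]) (by positivity)

theorem hasDerivAt_Kmu (hμ : 0 < μ) {x : ℝ} (hx : 0 < x) :
    HasDerivAt (Kmu μ)
      (-(√(2 / π) * ∫ τ in Ioi 0, τ ^ 2 * exp (-x * τ) / (μ ^ 2 + τ ^ 2))) x := by
  have hL := hasDerivAt_integral_Ioi_mul_exp_neg (continuous_div_sq_add_sq hμ.ne')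
    (fun τ hτ => abs_div_sq_add_sq_le hμ hτ) (fun τ _ => abs_mul_div_sq_add_sq_le_one τ) hx
  have hK : Kmu μ =ᶠ[𝓝 x]
      fun y => √(2 / π) * ∫ τ in Ioi 0, τ / (μ ^ 2 + τ ^ 2) * exp (-y * τ) := by
    filter_upwards [Ioi_mem_nhds hx] with y (hy : 0 < y)
    simp only [Kmu, abs_of_pos hy, mul_div_right_comm]
  have h_integrand : ∫ τ in Ioi 0, τ ^ 2 * exp (-x * τ) / (μ ^ 2 + τ ^ 2) =
      ∫ τ in Ioi 0, τ * (τ / (μ ^ 2 + τ ^ 2)) * exp (-x * τ) := by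
    congr 1
    ext τ
    ring
  rw [h_integrand, ← mul_neg]
  exact (hL.const_mul _).congr_of_eventuallyEq hK

theorem exp_neg_div_two_mul_inv_le_integral (hμ : 0 < μ) {x : ℝ} (hx₀ : 0 < x) (hx₁ : x ≤ 1) :
    exp (-μ) / 2 * x⁻¹ ≤ ∫ τ in Ioi 0, τ ^ 2 * exp (-x * τ) / (μ ^ 2 + τ ^ 2) := by
  have hint : IntegrableOn (fun τ => τ ^ 2 * exp (-x * τ) / (μ ^ 2 + τ ^ 2)) (Ioi 0) :=
    (integrableOn_Ioi_mul_exp_neg (g := fun τ => τ * (τ / (μ ^ 2 + τ ^ 2)))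
      (continuous_id.mul (continuous_div_sq_add_sq hμ.ne'))
      (fun τ _ => abs_mul_div_sq_add_sq_le_one τ) hx₀).congr_fun (fun τ _ => by ring)
      measurableSet_Ioi
  have h_exp : exp (-μ) ≤ exp (-x * μ) := exp_le_exp.2 (by nlinarith)
  calc exp (-μ) / 2 * x⁻¹ = exp (-μ) / x / 2 := by ring
    _ ≤ exp (-x * μ) / x / 2 := by gcongr
    _ = ∫ τ in Ioi μ, exp (-x * τ) / 2 := by
        rw [integral_div, integral_exp_mul_Ioi (neg_lt_zero.2 hx₀), neg_div_neg_eq]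
    _ ≤ ∫ τ in Ioi μ, τ ^ 2 * exp (-x * τ) / (μ ^ 2 + τ ^ 2) := by
        refine setIntegral_mono_on ((integrableOn_exp_mul_Ioi (neg_lt_zero.2 hx₀) μ).div_const 2)
          (hint.mono_set (Ioi_subset_Ioi hμ.le)) measurableSet_Ioi fun τ (hτ : μ < τ) => ?_
        rw [div_le_div_iff₀ two_pos (by positivity)]
        have hsq : μ ^ 2 ≤ τ ^ 2 := sq_le_sq' (by linarith) hτ.le
        nlinarith [mul_le_mul_of_nonneg_left hsq (exp_pos (-x * τ)).le]
    _ ≤ ∫ τ in Ioi 0, τ ^ 2 * exp (-x * τ) / (μ ^ 2 + τ ^ 2) :=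
        setIntegral_mono_set hint
          (ae_restrict_of_forall_mem measurableSet_Ioi fun τ _ => by positivity)
          (Ioi_subset_Ioi hμ.le).eventuallyLE

end Kernel

/-- For every `μ > 0`, the derivative `K_μ′` is not integrable on `ℝ`; equivalently,
`∫_0^1 (∫_0^∞ τ² e^{−xτ}/(μ²+τ²) dτ) dx = +∞`.  Consequently `K_μ′ ∉ L¹(ℝ)`. -/
theorem Kmu_deriv_not_integrable (μ : ℝ) (hμ : 0 < μ) :
    ¬ Integrable (deriv (Kmu μ)) volume ∧
      ∫⁻ x in Ioo (0:ℝ) 1,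
        ENNReal.ofReal (∫ τ in Ioi (0:ℝ), τ ^ 2 * Real.exp (-x * τ) / (μ ^ 2 + τ ^ 2)) = ⊤ := by
  set F := fun x : ℝ => ∫ τ in Ioi (0:ℝ), τ ^ 2 * Real.exp (-x * τ) / (μ ^ 2 + τ ^ 2)
  have hF_top : ∫⁻ x in Ioo (0:ℝ) 1, ENNReal.ofReal (F x) = ⊤ :=
    top_unique <| (lintegral_Ioo_zero_ofReal_const_mul_inv (by positivity) one_pos).symm.le.trans
      (setLIntegral_mono' measurableSet_Ioo fun x hx => ENNReal.ofReal_le_ofReal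
        (exp_neg_div_two_mul_inv_le_integral hμ hx.1 hx.2.le))
  refine ⟨fun h => ?_, hF_top⟩
  have hc : √(2 / π) ≠ 0 := by positivity
  have hF_int : IntegrableOn F (Ioo 0 1) :=
    IntegrableOn.congr_fun (h.integrableOn.const_mul (-(√(2 / π))⁻¹)) (fun x hx => by
      rw [(hasDerivAt_Kmu hμ hx.1).deriv, neg_mul_neg, inv_mul_cancel_left₀ hc]) measurableSet_Ioo
  exact hF_int.setLIntegral_lt_top.ne hF_top
end
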